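/- arXiv:1810.05069 — 2 statements merged into one kernel-verified Lean document; each statement's English description precedes it below -/
import Mathlib

section
/- Let K ⊂ ℂ be compact with K ⊂ {y : |y| ≤ b} for some b > 0. Then for every x = x₁ + ix₂ ∈ ℂ, ∫_K e^{−Re((x−y)²)}/|x−y| dy ≤ 2πe + 2√π · b · e^{(|x₂| + b)²}. -/
/-!
On the strip `|Im y| ≤ b`, which contains `K`, the integrand is dominated by
`e · 1_{|x-y|<1} / |x-y| + e^{(|x₂|+b)²} · e^{-(x₁-y₁)²} · 1_{|y₂|≤b}`.
Indeed, for `w = x - y` we have `-Re w² = (Im w)² - (Re w)²`; this is `≤ 1` when `|w| < 1`,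
and `≤ (|x₂|+b)² - (x₁-y₁)²` on the strip, where for `|w| ≥ 1` the factor `1/|w|` is dropped.
The first term has integral `2πe` in polar coordinates, the second `2√π b e^{(|x₂|+b)²}` by Fubini.
-/

open MeasureTheory Set Metric Real

namespace Complex

variable {𝕜 : Type*} [RCLike 𝕜]

theorem integrable_re_mul_im {f g : ℝ → 𝕜} (hf : Integrable f) (hg : Integrable g) :
    Integrable fun z : ℂ => f z.re * g z.im :=
  (volume_preserving_equiv_real_prod.integrable_comp_emb (g := fun p : ℝ × ℝ => f p.1 * g p.2)
    measurableEquivRealProd.measurableEmbedding).2 (hf.mul_prod hg)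

theorem integral_re_mul_im (f g : ℝ → 𝕜) :
    ∫ z : ℂ, f z.re * g z.im = (∫ t, f t) * ∫ t, g t := by
  rw [← integral_prod_mul, ← Measure.volume_eq_prod]
  exact volume_preserving_equiv_real_prod.integral_comp
    measurableEquivRealProd.measurableEmbedding (fun p : ℝ × ℝ => f p.1 * g p.2)

theorem neg_re_sq (w : ℂ) : -(w ^ 2).re = w.im ^ 2 - w.re ^ 2 := by
  simp [sq]

end Complex

theorem mul_indicator_Iio_inv_eqOn (r : ℝ) :
    EqOn (fun t => t * (Iio r).indicator (·⁻¹) t) ((Iio r).indicator 1) (Ioi 0) := by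
  intro t (ht : 0 < t)
  by_cases htr : t < r <;> simp [htr, ht.ne']

theorem integrable_indicator_Iio_inv_norm (r : ℝ) :
    Integrable fun z : ℂ => (Iio r).indicator (·⁻¹) ‖z‖ := by
  simp only [integrable_fun_norm_addHaar, Complex.finrank_real_complex, Nat.add_one_sub_one,
    pow_one, smul_eq_mul]
  rw [integrableOn_congr_fun (mul_indicator_Iio_inv_eqOn r) measurableSet_Ioi,
    IntegrableOn, integrable_indicator_iff measurableSet_Iio]
  refine integrableOn_const ?_
  rw [Measure.restrict_apply measurableSet_Iio, inter_comm, Ioi_inter_Iio]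
  simp

theorem integral_indicator_Iio_inv_norm {r : ℝ} (hr : 0 ≤ r) :
    ∫ z : ℂ, (Iio r).indicator (·⁻¹) ‖z‖ = 2 * π * r := by
  simp only [integral_fun_norm_addHaar, Complex.finrank_real_complex, Nat.add_one_sub_one,
    pow_one, smul_eq_mul]
  rw [setIntegral_congr_fun measurableSet_Ioi (mul_indicator_Iio_inv_eqOn r),
    setIntegral_indicator measurableSet_Iio, Ioi_inter_Iio]
  simp [measureReal_def, hr, mul_assoc]

theorem integrable_indicator_Iio_inv_norm_sub (x : ℂ) (r : ℝ) :
    Integrable fun y : ℂ => (Iio r).indicator (·⁻¹) ‖x - y‖ :=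
  (integrable_indicator_Iio_inv_norm r).comp_sub_left x

theorem integral_indicator_Iio_inv_norm_sub (x : ℂ) {r : ℝ} (hr : 0 ≤ r) :
    ∫ y : ℂ, (Iio r).indicator (·⁻¹) ‖x - y‖ = 2 * π * r := by
  rw [integral_sub_left_eq_self (fun z : ℂ => (Iio r).indicator (·⁻¹) ‖z‖),
    integral_indicator_Iio_inv_norm hr]

theorem integrable_exp_neg_sq_sub (a : ℝ) : Integrable fun t : ℝ => exp (-(a - t) ^ 2) := by
  simpa using (integrable_exp_neg_mul_sq one_pos).comp_sub_left a

theorem integral_exp_neg_sq_sub (a : ℝ) : ∫ t : ℝ, exp (-(a - t) ^ 2) = √π := by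
  simpa [integral_sub_left_eq_self (fun t : ℝ => exp (-t ^ 2))] using integral_gaussian 1

theorem integrable_exp_neg_sq_sub_re_mul_indicator_im (a b : ℝ) :
    Integrable fun y : ℂ => exp (-(a - y.re) ^ 2) * (Icc (-b) b).indicator 1 y.im :=
  Complex.integrable_re_mul_im (integrable_exp_neg_sq_sub a)
    ((integrable_indicator_iff measurableSet_Icc).2 (integrableOn_const (by simp)))

theorem integral_exp_neg_sq_sub_re_mul_indicator_im (a : ℝ) {b : ℝ} (hb : 0 ≤ b) :
    ∫ y : ℂ, exp (-(a - y.re) ^ 2) * (Icc (-b) b).indicator 1 y.im = 2 * √π * b := by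
  rw [Complex.integral_re_mul_im (fun t => exp (-(a - t) ^ 2)), integral_exp_neg_sq_sub,
    integral_indicator_one measurableSet_Icc]
  simp [measureReal_def, hb]
  ring

theorem exp_neg_re_sq_div_norm_le_of_norm_lt_one {w : ℂ} (hw : ‖w‖ < 1) :
    exp (-(w ^ 2).re) / ‖w‖ ≤ exp 1 * ‖w‖⁻¹ := by
  rw [div_eq_mul_inv]
  gcongr
  have him : |w.im| < 1 := (w.abs_im_le_norm).trans_lt hw
  rw [Complex.neg_re_sq]
  nlinarith [abs_lt.1 him, sq_nonneg w.re]

theorem exp_neg_re_sq_div_norm_le_of_one_le_norm {w : ℂ} {M : ℝ} (hw : 1 ≤ ‖w‖)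
    (hM : |w.im| ≤ M) : exp (-(w ^ 2).re) / ‖w‖ ≤ exp (M ^ 2) * exp (-w.re ^ 2) := by
  calc exp (-(w ^ 2).re) / ‖w‖ ≤ exp (-(w ^ 2).re) := div_le_self (exp_nonneg _) hw
    _ ≤ exp (M ^ 2) * exp (-w.re ^ 2) := by
      have hM2 : w.im ^ 2 ≤ M ^ 2 := sq_abs w.im ▸ pow_le_pow_left₀ (abs_nonneg _) hM 2
      rw [← exp_add, Complex.neg_re_sq]
      gcongr
      linarith

theorem indicator_strip_exp_neg_re_sq_div_norm_le (x : ℂ) (b : ℝ) (y : ℂ) :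
    (Complex.im ⁻¹' Icc (-b) b).indicator (fun y => exp (-((x - y) ^ 2).re) / ‖x - y‖) y ≤
      exp 1 * (Iio 1).indicator (·⁻¹) ‖x - y‖ +
        exp ((|x.im| + b) ^ 2) * (exp (-(x.re - y.re) ^ 2) * (Icc (-b) b).indicator 1 y.im) := by
  by_cases hy : y.im ∈ Icc (-b) b
  swap
  · rw [indicator_of_notMem (show y ∉ Complex.im ⁻¹' Icc (-b) b from hy),
      indicator_of_notMem hy, mul_zero, mul_zero, add_zero]
    exact mul_nonneg (exp_nonneg 1) (indicator_apply_nonneg fun _ => inv_nonneg.2 (norm_nonneg _))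
  rw [indicator_of_mem (show y ∈ Complex.im ⁻¹' Icc (-b) b from hy), indicator_of_mem hy,
    Pi.one_apply, mul_one]
  rcases lt_or_ge ‖x - y‖ 1 with hnear | hfar
  · rw [indicator_of_mem (show ‖x - y‖ ∈ Iio 1 from hnear)]
    exact le_add_of_le_of_nonneg (exp_neg_re_sq_div_norm_le_of_norm_lt_one hnear) (by positivity)
  · have him : |(x - y).im| ≤ |x.im| + b := by
      rw [Complex.sub_im]; exact (abs_sub _ _).trans (add_le_add_right (abs_le.2 hy) _)
    rw [indicator_of_notMem (show ‖x - y‖ ∉ Iio 1 from not_lt.2 hfar), mul_zero, zero_add,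
      ← Complex.sub_re]
    exact exp_neg_re_sq_div_norm_le_of_one_le_norm hfar him

theorem stmt4_general (K : Set ℂ) (b : ℝ) (hb : 0 < b)
    (hKb : K ⊆ Metric.closedBall 0 b) (x : ℂ) :
    ∫ y in K, Real.exp (-((x - y) ^ 2).re) / ‖x - y‖ ≤
      2 * Real.pi * Real.exp 1 +
        2 * Real.sqrt Real.pi * b * Real.exp ((|x.im| + b) ^ 2) := by
  set f : ℂ → ℝ := fun y => exp (-((x - y) ^ 2).re) / ‖x - y‖
  set S : Set ℂ := Complex.im ⁻¹' Icc (-b) b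
  set F : ℂ → ℝ := fun y => exp 1 * (Iio 1).indicator (·⁻¹) ‖x - y‖ +
    exp ((|x.im| + b) ^ 2) * (exp (-(x.re - y.re) ^ 2) * (Icc (-b) b).indicator 1 y.im)
  have hS : MeasurableSet S := measurableSet_Icc.preimage Complex.measurable_im
  have hKS : K ⊆ S := fun y hy =>
    abs_le.1 ((Complex.abs_im_le_norm y).trans (mem_closedBall_zero_iff.1 (hKb hy)))
  have hf_nonneg : ∀ y, 0 ≤ f y := fun y => by positivity
  have hfF : ∀ y, S.indicator f y ≤ F y := indicator_strip_exp_neg_re_sq_div_norm_le x b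
  have hball := (integrable_indicator_Iio_inv_norm_sub x 1).const_mul (exp 1)
  have hstrip := (integrable_exp_neg_sq_sub_re_mul_indicator_im x.re b).const_mul
    (exp ((|x.im| + b) ^ 2))
  have hF : Integrable F := hball.add hstrip
  have hf : Integrable (S.indicator f) := hF.mono'
    ((by fun_prop : Measurable f).indicator hS).aestronglyMeasurable
    (ae_of_all _ fun y => by
      rw [Real.norm_of_nonneg (indicator_nonneg (fun y _ => hf_nonneg y) y)]; exact hfF y)
  calc ∫ y in K, f y ≤ ∫ y in S, f y :=
        setIntegral_mono_set ((integrable_indicator_iff hS).1 hf)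
          (ae_of_all _ hf_nonneg) hKS.eventuallyLE
    _ = ∫ y, S.indicator f y := (integral_indicator hS).symm
    _ ≤ ∫ y, F y := integral_mono hf hF hfF
    _ = _ := by
      rw [integral_add hball hstrip, integral_const_mul, integral_const_mul,
        integral_indicator_Iio_inv_norm_sub x zero_le_one,
        integral_exp_neg_sq_sub_re_mul_indicator_im x.re hb.le]
      ring

/-- for `K ⊆ {|y| ≤ b}` compact, `b > 0`, and `x = x₁ + i x₂ ∈ ℂ`,
`∫_K e^{-Re((x-y)²)}/|x-y| dy ≤ 2πe + 2√π · b · e^{(|x₂| + b)²}`. -/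
theorem stmt4 (K : Set ℂ) (hK : IsCompact K) (b : ℝ) (hb : 0 < b)
    (hKb : K ⊆ Metric.closedBall 0 b) (x : ℂ) :
    ∫ y in K, Real.exp (-((x - y) ^ 2).re) / ‖x - y‖ ≤
      2 * Real.pi * Real.exp 1 +
        2 * Real.sqrt Real.pi * b * Real.exp ((|x.im| + b) ^ 2) :=
  stmt4_general K b hb hKb x
end

section
/- Let Ω ⊂ ℂ be open, ν : Ω → (0, ∞) continuous, g entire, E(z) = g(z)/(πz), and let X ⊂ ℂ be open with dist(X, Ω) =: d > 0. Suppose there are 0 < 2R < d, R < r < d − R and a locally bounded function A : X → (0, ∞) with max{|g(ζ)| ν(z) : |ζ − (z − x)| = r} ≤ A(x) for all z ∈ Ω, x ∈ X. Then for any continuous linear functional w on the space of smooth functions on Ω (with the weighted seminorms |f|_m = sup_{z∈Ω, |β|≤m} |∂^β f(z)| ν(z)), the function x ↦ ⟨w, E(· − x)|_Ω⟩ is infinitely differentiable on X and ∂^α_x ⟨w, E(· − x)|_Ω⟩ = ⟨w, ∂^α_x [E(· − x)]|_Ω⟩ for all multi-indices α. -/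
open Complex

/-- Real partial derivative of `f : ℂ → ℂ` in the direction `v`. -/
noncomputable def pd (v : ℂ) (f : ℂ → ℂ) : ℂ → ℂ := fun z => fderiv ℝ f z v

/-- Iterated real partial derivative `∂₁^a ∂₂^b f`. -/
noncomputable def pdi (a b : ℕ) (f : ℂ → ℂ) : ℂ → ℂ := (pd 1)^[a] ((pd I)^[b] f)

section AuxLemmas

lemma pd_congrOn {V : Set ℂ} (hV : IsOpen V) {f g : ℂ → ℂ} (h : Set.EqOn f g V) (v : ℂ) :
    Set.EqOn (pd v f) (pd v g) V := by
  intro z hz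
  have hev : f =ᶠ[nhds z] g := Filter.eventuallyEq_of_mem (hV.mem_nhds hz) h
  simp only [pd, hev.fderiv_eq]

lemma pd_iter_congrOn {V : Set ℂ} (hV : IsOpen V) {f g : ℂ → ℂ} (h : Set.EqOn f g V) (v : ℂ)
    (k : ℕ) : Set.EqOn ((pd v)^[k] f) ((pd v)^[k] g) V := by
  induction k generalizing f g with
  | zero => exact h
  | succ k ih =>
    rw [Function.iterate_succ_apply, Function.iterate_succ_apply]
    exact ih (pd_congrOn hV h v)

lemma pd_zero (v : ℂ) : pd v (fun _ => (0:ℂ)) = fun _ => 0 := by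
  funext z; simp [pd]

lemma pd_iter_zero (v : ℂ) (k : ℕ) : (pd v)^[k] (fun _ => (0:ℂ)) = fun _ => 0 :=
  Function.iterate_fixed (pd_zero v) k

lemma pdi_zero (a b : ℕ) : pdi a b (fun _ => (0:ℂ)) = fun _ => 0 := by
  simp only [pdi, pd_iter_zero]

lemma pdi_congrOn {V : Set ℂ} (hV : IsOpen V) {f g : ℂ → ℂ} (h : Set.EqOn f g V) (a b : ℕ) :
    Set.EqOn (pdi a b f) (pdi a b g) V := by
  intro z hz
  exact pd_iter_congrOn hV (pd_iter_congrOn hV h I b) 1 a hz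

lemma pd_family {V : Set ℂ} (hV : IsOpen V) {G : ℕ → ℂ → ℂ}
    (hG : ∀ j, ∀ z ∈ V, HasDerivAt (G j) (G (j+1) z) z) (v : ℂ) (j : ℕ) :
    Set.EqOn (pd v (G j)) (fun z => v * G (j+1) z) V := by
  intro z hz
  have h1 : HasFDerivAt (G j) ((1 : ℂ →L[ℂ] ℂ).smulRight (G (j+1) z)) z := (hG j z hz).hasFDerivAt
  have h2 := h1.restrictScalars ℝ
  simp only [pd, h2.fderiv]
  simp [smul_eq_mul]

lemma pd_iter_family (v : ℂ) : ∀ (k : ℕ) {V : Set ℂ} (_ : IsOpen V) (G : ℕ → ℂ → ℂ)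
    (_ : ∀ j, ∀ z ∈ V, HasDerivAt (G j) (G (j+1) z) z) (j : ℕ),
    Set.EqOn ((pd v)^[k] (G j)) (fun z => v^k * G (j+k) z) V := by
  intro k
  induction k with
  | zero => intro V hV G hG j z hz; simp
  | succ k ih =>
    intro V hV G hG j z hz
    rw [Function.iterate_succ_apply]
    rw [pd_iter_congrOn hV (pd_family hV hG v j) v k hz]
    have := ih hV (fun i => fun z => v * G i z) (fun i z hz => ((hG i z hz).const_mul v)) (j+1) hz
    rw [this]
    have hidx : j + 1 + k = j + (k + 1) := by omega
    rw [hidx]; ring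

lemma pdi_family {V : Set ℂ} (hV : IsOpen V) {G : ℕ → ℂ → ℂ}
    (hG : ∀ j, ∀ z ∈ V, HasDerivAt (G j) (G (j+1) z) z) (a b : ℕ) :
    Set.EqOn (pdi a b (G 0)) (fun z => I^b * G (a+b) z) V := by
  intro z hz
  simp only [pdi]
  have e1 : Set.EqOn ((pd I)^[b] (G 0)) (fun z => I^b * G b z) V := by
    intro y hy
    have := pd_iter_family I b hV G hG 0 hy
    simpa using this
  rw [pd_iter_congrOn hV e1 1 a hz]
  have := pd_iter_family 1 a hV (fun i => fun z => I^b * G i z)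
      (fun i z hz => ((hG i z hz).const_mul _)) b hz
  rw [this]
  have hidx : b + a = a + b := by omega
  rw [hidx]; ring

lemma cauchy_bound {f : ℂ → ℂ} {ξ : ℂ} {ρ M : ℝ} (hρ : 0 < ρ)
    (hf : DifferentiableOn ℂ f (Metric.closedBall ξ ρ))
    (hM : ∀ ζ ∈ Metric.sphere ξ ρ, ‖f ζ‖ ≤ M) (n : ℕ) :
    ‖deriv^[n] f ξ‖ ≤ n.factorial * M / ρ^n := by
  have hM0 : 0 ≤ M := by
    refine le_trans (norm_nonneg (f (ξ + ρ))) (hM _ ?_)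
    simp [mem_sphere_iff_norm, Complex.norm_real, abs_of_pos hρ]
  set ρ' : NNReal := ⟨ρ, hρ.le⟩ with hρ'def
  have hρ' : 0 < ρ' := by exact_mod_cast hρ
  have hps : HasFPowerSeriesOnBall f (cauchyPowerSeries f ξ ρ') ξ ρ' :=
    hf.hasFPowerSeriesOnBall hρ'
  have key := hps.factorial_smul (1:ℂ) n
  have e0 : deriv^[n] f ξ = iteratedFDeriv ℂ n f ξ (fun _ => 1) := by
    rw [← funext_iff.mp (iteratedDeriv_eq_iterate (n := n) (f := f)) ξ,
      iteratedDeriv_eq_iteratedFDeriv]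
  have hcont : ContinuousOn (fun θ : ℝ => ‖f (circleMap ξ ρ θ)‖) (Set.uIcc 0 (2*Real.pi)) := by
    apply ContinuousOn.norm
    apply hf.continuousOn.comp (continuous_circleMap ξ ρ).continuousOn
    intro θ _
    exact Metric.sphere_subset_closedBall (circleMap_mem_sphere _ hρ.le θ)
  have hint : (∫ θ : ℝ in (0)..2 * Real.pi, ‖f (circleMap ξ ρ θ)‖) ≤ 2 * Real.pi * M := by
    have := intervalIntegral.integral_mono_on (μ := MeasureTheory.volume)
      (f := fun θ : ℝ => ‖f (circleMap ξ ρ θ)‖) (g := fun _ : ℝ => M)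
      Real.two_pi_pos.le hcont.intervalIntegrable intervalIntegrable_const
      (fun θ _ => hM _ (circleMap_mem_sphere _ hρ.le θ))
    simpa [mul_comm] using this
  have hcoefnorm : ‖cauchyPowerSeries f ξ ρ n‖ ≤ M * ρ⁻¹^n := by
    refine le_trans (norm_cauchyPowerSeries_le f ξ ρ n) ?_
    rw [abs_of_pos hρ]
    refine mul_le_mul_of_nonneg_right ?_ (by positivity)
    rw [inv_mul_le_iff₀ (by positivity)]
    linarith [hint]
  have happ : ‖cauchyPowerSeries f ξ ρ n (fun _ => (1:ℂ))‖ ≤ M * ρ⁻¹^n := by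
    refine le_trans (ContinuousMultilinearMap.le_opNorm _ _) ?_
    simpa using hcoefnorm
  rw [e0, ← key]
  have heq : ‖n.factorial • cauchyPowerSeries f ξ ρ n (fun _ => (1:ℂ))‖
      = (n.factorial : ℝ) * ‖cauchyPowerSeries f ξ ρ n (fun _ => (1:ℂ))‖ := by
    rw [← Nat.cast_smul_eq_nsmul ℝ, norm_smul]
    simp
  rw [show ((ρ' : ℝ)) = ρ from rfl] at *
  rw [heq]
  calc (n.factorial : ℝ) * ‖cauchyPowerSeries f ξ ρ n (fun _ => (1:ℂ))‖
      ≤ (n.factorial : ℝ) * (M * ρ⁻¹^n) :=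
        mul_le_mul_of_nonneg_left happ (by positivity)
    _ = n.factorial * M / ρ^n := by
        rw [inv_pow]; ring

lemma taylor_bound {f f' f'' : ℂ → ℂ} {ζ₀ : ℂ} {R C₂ : ℝ}
    (hf' : ∀ ξ ∈ Metric.closedBall ζ₀ R, HasDerivAt f (f' ξ) ξ)
    (hf'' : ∀ ξ ∈ Metric.closedBall ζ₀ R, HasDerivAt f' (f'' ξ) ξ)
    (hC : ∀ ξ ∈ Metric.closedBall ζ₀ R, ‖f'' ξ‖ ≤ C₂)
    {h : ℂ} (hh : ‖h‖ ≤ R) :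
    ‖f (ζ₀ - h) - f ζ₀ + h * f' ζ₀‖ ≤ C₂ * ‖h‖^2 := by
  have hR0 : 0 ≤ R := le_trans (norm_nonneg h) hh
  have hC0 : 0 ≤ C₂ := le_trans (norm_nonneg _) (hC ζ₀ (Metric.mem_closedBall_self hR0))
  have hmem : ∀ (c : ℂ), ‖c‖ ≤ R → ∀ s ∈ Set.Icc (0:ℝ) 1, ζ₀ - s • c ∈ Metric.closedBall ζ₀ R := by
    intro c hc s hs
    rw [Metric.mem_closedBall, dist_eq_norm]
    have he : ζ₀ - s • c - ζ₀ = -(s • c) := by ring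
    rw [he, norm_neg, norm_smul, Real.norm_of_nonneg hs.1]
    calc s * ‖c‖ ≤ 1 * R := mul_le_mul hs.2 hc (norm_nonneg c) zero_le_one
      _ = R := one_mul R
  have hcurve : ∀ (c : ℂ) (s : ℝ), HasDerivAt (fun s : ℝ => ζ₀ - s • c) (-c) s := by
    intro c s
    have := ((hasDerivAt_id s).smul_const c).const_sub ζ₀
    simpa using this
  have inner : ∀ (c : ℂ), ‖c‖ ≤ R → ‖f' (ζ₀ - c) - f' ζ₀‖ ≤ C₂ * ‖c‖ := by
    intro c hc
    have hψ : ∀ s ∈ Set.Icc (0:ℝ) 1, HasDerivWithinAt (fun s : ℝ => f' (ζ₀ - s • c))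
        (-(c * f'' (ζ₀ - s • c))) (Set.Icc 0 1) s := by
      intro s hs
      have hd := ((hf'' _ (hmem c hc s hs)).hasFDerivAt.restrictScalars ℝ).comp_hasDerivAt
        s (hcurve c s)
      have : HasDerivAt (fun s : ℝ => f' (ζ₀ - s • c)) (-(c * f'' (ζ₀ - s • c))) s := by
        refine hd.congr_deriv ?_
        simp [smul_eq_mul]
      exact this.hasDerivWithinAt
    have hb : ∀ s ∈ Set.Icc (0:ℝ) 1, ‖-(c * f'' (ζ₀ - s • c))‖ ≤ C₂ * ‖c‖ := by
      intro s hs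
      rw [norm_neg, norm_mul, mul_comm]
      exact mul_le_mul_of_nonneg_right (hC _ (hmem c hc s hs)) (norm_nonneg c)
    have := (convex_Icc (0:ℝ) 1).norm_image_sub_le_of_norm_hasDerivWithin_le hψ hb
      (Set.left_mem_Icc.2 zero_le_one) (Set.right_mem_Icc.2 zero_le_one)
    simpa using this
  have hφ : ∀ t ∈ Set.Icc (0:ℝ) 1,
      HasDerivWithinAt (fun t : ℝ => f (ζ₀ - t • h) + (t • h) * f' ζ₀)
      (-(h * f' (ζ₀ - t • h)) + h * f' ζ₀) (Set.Icc 0 1) t := by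
    intro t ht
    have h1 := ((hf' _ (hmem h hh t ht)).hasFDerivAt.restrictScalars ℝ).comp_hasDerivAt
      t (hcurve h t)
    have h1' : HasDerivAt (fun t : ℝ => f (ζ₀ - t • h)) (-(h * f' (ζ₀ - t • h))) t := by
      refine h1.congr_deriv ?_
      simp [smul_eq_mul]
    have h2 : HasDerivAt (fun t : ℝ => (t • h) * f' ζ₀) (h * f' ζ₀) t := by
      have := (hasDerivAt_id t).smul_const (h * f' ζ₀)
      simpa [smul_mul_assoc, mul_assoc] using this
    exact (h1'.add h2).hasDerivWithinAt
  have hbφ : ∀ t ∈ Set.Icc (0:ℝ) 1,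
      ‖-(h * f' (ζ₀ - t • h)) + h * f' ζ₀‖ ≤ (C₂ * ‖h‖) * ‖h‖ := by
    intro t ht
    have he : -(h * f' (ζ₀ - t • h)) + h * f' ζ₀ = -(h * (f' (ζ₀ - t • h) - f' ζ₀)) := by ring
    rw [he, norm_neg, norm_mul]
    have hth : ‖t • h‖ ≤ R := by
      rw [norm_smul, Real.norm_of_nonneg ht.1]
      calc t * ‖h‖ ≤ 1 * R := mul_le_mul ht.2 hh (norm_nonneg h) zero_le_one
        _ = R := one_mul R
    have hle : ‖f' (ζ₀ - t • h) - f' ζ₀‖ ≤ C₂ * ‖h‖ := by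
      refine le_trans (inner (t • h) hth) ?_
      rw [norm_smul, Real.norm_of_nonneg ht.1]
      have : C₂ * (t * ‖h‖) ≤ C₂ * (1 * ‖h‖) :=
        mul_le_mul_of_nonneg_left (mul_le_mul_of_nonneg_right ht.2 (norm_nonneg h)) hC0
      simpa using this
    calc ‖h‖ * ‖f' (ζ₀ - t • h) - f' ζ₀‖ ≤ ‖h‖ * (C₂ * ‖h‖) :=
        mul_le_mul_of_nonneg_left hle (norm_nonneg h)
      _ = (C₂ * ‖h‖) * ‖h‖ := by ring
  have key := (convex_Icc (0:ℝ) 1).norm_image_sub_le_of_norm_hasDerivWithin_le hφ hbφ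
    (Set.left_mem_Icc.2 zero_le_one) (Set.right_mem_Icc.2 zero_le_one)
  simp only [one_smul, zero_smul, sub_zero, zero_mul, add_zero] at key
  have he : f (ζ₀ - h) + h * f' ζ₀ - f ζ₀ = f (ζ₀ - h) - f ζ₀ + h * f' ζ₀ := by ring
  rw [he] at key
  exact le_trans key (le_of_eq (by rw [norm_one, mul_one]; ring))

end AuxLemmas

/-- differentiation under the pairing with a continuous functional. Let `Ω, X ⊆ ℂ`
be open with distance `≥ d > 0`, `ν` a continuous positive weight on `Ω`, `g` entire,
`E w = g w/(π w)`, `0 < 2R < d`, `R < r < d - R`, and `A : X → (0,∞)` locally bounded with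
`max_{|ζ-(z-x)|=r} |g ζ| ν z ≤ A x` for `z ∈ Ω`, `x ∈ X`. If `w` is a linear functional that is
continuous for the weighted seminorms `|f|_m = sup_{z ∈ Ω, |β| ≤ m} |∂^β f(z)| ν(z)` (i.e.
`‖w f‖ ≤ C·B` whenever `B` bounds that seminorm of `f`), then `x ↦ ⟨w, E(· - x)⟩` is `C^∞`
on `X` and `∂^α_x ⟨w, E(· - x)⟩ = ⟨w, ∂^α_x [E(· - x)]⟩` for every multi-index `α`. -/
theorem stmt18 (Ω X : Set ℂ) (hΩ : IsOpen Ω) (hX : IsOpen X)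
    (ν : ℂ → ℝ) (hν : ContinuousOn ν Ω) (hνpos : ∀ z ∈ Ω, 0 < ν z)
    (g : ℂ → ℂ) (hg : Differentiable ℂ g)
    (E : ℂ → ℂ) (hE : ∀ z : ℂ, z ≠ 0 → E z = g z / ((Real.pi : ℂ) * z))
    (dXΩ R r : ℝ) (hd : 0 < dXΩ) (hdist : ∀ x ∈ X, ∀ z ∈ Ω, dXΩ ≤ ‖z - x‖)
    (hR : 0 < R) (hRd : 2 * R < dXΩ) (hRr : R < r) (hrd : r < dXΩ - R)
    (A : ℂ → ℝ) (hApos : ∀ x ∈ X, 0 < A x)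
    (hAloc : ∀ x ∈ X, ∃ s ∈ nhds x, ∃ M : ℝ, ∀ y ∈ s ∩ X, A y ≤ M)
    (hA : ∀ z ∈ Ω, ∀ x ∈ X, ∀ ζ : ℂ, ‖ζ - (z - x)‖ = r → ‖g ζ‖ * ν z ≤ A x)
    (w : (ℂ → ℂ) →ₗ[ℂ] ℂ) (C : ℝ) (m : ℕ)
    (hw : ∀ (f : ℂ → ℂ) (B : ℝ),
      (∀ z ∈ Ω, ∀ a b : ℕ, a + b ≤ m → ‖pdi a b f z‖ * ν z ≤ B) → ‖w f‖ ≤ C * B) :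
    ContDiffOn ℝ (⊤ : ℕ∞) (fun x => w (fun z => E (z - x))) X ∧
      ∀ x ∈ X, ∀ a b : ℕ,
        pdi a b (fun x' => w (fun z => E (z - x'))) x =
          w (fun z => pdi a b (fun x' => E (z - x')) x) := by
  have hπ : (0:ℝ) < Real.pi := Real.pi_pos
  have hrpos : 0 < r := hR.trans hRr
  have hrR : 0 < r - R := by linarith
  have hdr : 0 < dXΩ - r := by linarith
  -- E is holomorphic away from 0
  have hEdiff : DifferentiableOn ℂ E {z : ℂ | z ≠ 0} := by
    intro z hz
    have hz' : z ≠ 0 := hz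
    have hd2 : DifferentiableAt ℂ (fun ζ => g ζ / ((Real.pi:ℂ) * ζ)) z := by
      apply (hg z).div ((differentiableAt_const _).mul differentiableAt_id)
      simp [hz', Real.pi_ne_zero]
    have hev : E =ᶠ[nhds z] (fun ζ => g ζ / ((Real.pi:ℂ) * ζ)) :=
      Filter.eventually_of_mem (isOpen_ne.mem_nhds hz') (fun ζ hζ => hE ζ hζ)
    exact (hd2.congr_of_eventuallyEq hev).differentiableWithinAt
  set En : ℕ → ℂ → ℂ := fun n => deriv^[n] E with hEndef
  have hEnsucc : ∀ (n : ℕ) (ζ : ℂ), En (n+1) ζ = deriv (En n) ζ := by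
    intro n ζ
    exact congrFun (Function.iterate_succ_apply' deriv n E) ζ
  have hEnhol : ∀ n, AnalyticOnNhd ℂ (En n) {z : ℂ | z ≠ 0} := by
    intro n; induction n with
    | zero => exact hEdiff.analyticOnNhd isOpen_ne
    | succ n ih =>
      have he : En (n+1) = deriv (En n) := funext (hEnsucc n)
      rw [he]; exact ih.deriv
  have hEnD : ∀ (n : ℕ) (ζ : ℂ), ζ ≠ 0 → HasDerivAt (En n) (En (n+1) ζ) ζ := by
    intro n ζ hζ
    have h2 := ((hEnhol n) ζ hζ).differentiableAt.hasDerivAt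
    rwa [← hEnsucc n ζ] at h2
  have hshift : ∀ (c : ℂ) (j : ℕ) (z : ℂ), z - c ≠ 0 →
      HasDerivAt (fun z => En j (z - c)) (En (j+1) (z - c)) z := by
    intro c j z hzc
    have := (hEnD j (z - c) hzc).comp z ((hasDerivAt_id z).sub_const c)
    simpa [Function.comp_def] using this
  have hshift' : ∀ (z : ℂ) (j : ℕ) (x : ℂ), z - x ≠ 0 →
      HasDerivAt (fun x => En j (z - x)) (-En (j+1) (z - x)) x := by
    intro z j x hzx
    have := (hEnD j (z - x) hzx).comp x ((hasDerivAt_id x).const_sub z)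
    simpa [mul_comm, Function.comp_def] using this
  -- w only depends on values on Ω
  have wcongr : ∀ f f' : ℂ → ℂ, Set.EqOn f f' Ω → w f = w f' := by
    intro f f' hff
    have h0 : Set.EqOn (f - f') (fun _ => (0:ℂ)) Ω := by
      intro z hz; simp [Pi.sub_apply, hff hz]
    have hb : ∀ z ∈ Ω, ∀ a b : ℕ, a + b ≤ m → ‖pdi a b (f - f') z‖ * ν z ≤ 0 := by
      intro z hz a b _
      rw [pdi_congrOn hΩ h0 a b hz, pdi_zero]
      simp
    have h1 := hw (f - f') 0 hb
    rw [mul_zero] at h1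
    rw [map_sub w f f'] at h1
    exact sub_eq_zero.mp (norm_le_zero_iff.mp h1)
  -- the key derivative computation
  have main : ∀ (n : ℕ), ∀ x₀ ∈ X,
      HasDerivAt (fun x => w (fun z => (-1:ℂ)^n * En n (z - x)))
        (w (fun z => (-1:ℂ)^(n+1) * En (n+1) (z - x₀))) x₀ := by
    intro n x₀ hx₀
    set M0 : ℝ := A x₀ / (Real.pi * (dXΩ - r)) with hM0def
    have hM0pos : 0 < M0 := div_pos (hApos x₀ hx₀) (by positivity)
    set KK : ℕ → ℝ := fun k => k.factorial * M0 / (r - R)^k with hKKdef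
    have hKKpos : ∀ k, 0 < KK k := by
      intro k
      have : (0:ℝ) < k.factorial := by exact_mod_cast k.factorial_pos
      rw [hKKdef]
      positivity
    -- derivative bounds on closed balls around z - x₀
    have hEnbound : ∀ z ∈ Ω, ∀ (k : ℕ), ∀ ξ ∈ Metric.closedBall (z - x₀) R,
        ‖En k ξ‖ * ν z ≤ KK k := by
      intro z hz k ξ hξ
      have hνz := hνpos z hz
      have hζ₀ : dXΩ ≤ ‖z - x₀‖ := hdist x₀ hx₀ z hz
      have subU : Metric.closedBall (z - x₀) r ⊆ {z : ℂ | z ≠ 0} := by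
        intro ζ hζ
        rw [Metric.mem_closedBall, dist_eq_norm] at hζ
        have h2 : ‖z - x₀‖ - ‖ζ‖ ≤ r := by
          have h3 := norm_sub_norm_le (z - x₀) ζ
          rw [norm_sub_rev] at hζ
          linarith
        show ζ ≠ 0
        intro h0
        rw [h0, norm_zero] at h2
        linarith
      have hSp : ∀ ζ ∈ Metric.sphere (z - x₀) r, ‖E ζ‖ ≤ M0 / ν z := by
        intro ζ hζS
        have hζr : ‖ζ - (z - x₀)‖ = r := by
          rw [Metric.mem_sphere, dist_eq_norm] at hζS; exact hζS
        have hg' : ‖g ζ‖ * ν z ≤ A x₀ := hA z hz x₀ hx₀ ζ hζr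
        have hζnorm : dXΩ - r ≤ ‖ζ‖ := by
          have h3 := norm_sub_norm_le (z - x₀) ζ
          have h2 : ‖z - x₀ - ζ‖ = r := by rw [norm_sub_rev]; exact hζr
          linarith
        have hζ0 : ζ ≠ 0 := by
          intro h0; rw [h0, norm_zero] at hζnorm; linarith
        rw [hE ζ hζ0, norm_div, norm_mul]
        have hπζ : ‖((Real.pi:ℝ):ℂ)‖ = Real.pi := by
          rw [Complex.norm_real, Real.norm_of_nonneg hπ.le]
        rw [hπζ]
        have hgb : ‖g ζ‖ ≤ A x₀ / ν z := (le_div_iff₀ hνz).mpr hg'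
        have hden : Real.pi * (dXΩ - r) ≤ Real.pi * ‖ζ‖ := by nlinarith
        calc ‖g ζ‖ / (Real.pi * ‖ζ‖) ≤ (A x₀ / ν z) / (Real.pi * (dXΩ - r)) :=
              div_le_div₀ (div_pos (hApos x₀ hx₀) hνz).le hgb (by positivity) hden
          _ = M0 / ν z := by rw [hM0def, div_right_comm]
      have hcb : ∀ ζ ∈ Metric.closedBall (z - x₀) r, ‖E ζ‖ ≤ M0 / ν z := by
        intro ζ hζ
        have hdcc : DiffContOnCl ℂ E (Metric.ball (z - x₀) r) := by
          apply DifferentiableOn.diffContOnCl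
          rw [closure_ball _ hrpos.ne']
          exact hEdiff.mono subU
        refine Complex.norm_le_of_forall_mem_frontier_norm_le Metric.isBounded_ball hdcc ?_ ?_
        · rw [frontier_ball _ hrpos.ne']; exact hSp
        · rw [closure_ball _ hrpos.ne']; exact hζ
      have hsub2 : Metric.closedBall ξ (r - R) ⊆ Metric.closedBall (z - x₀) r := by
        apply Metric.closedBall_subset_closedBall'
        rw [Metric.mem_closedBall] at hξ
        linarith
      have hcau := cauchy_bound hrR (hEdiff.mono (hsub2.trans subU))
        (fun ζ hζ => hcb ζ (hsub2 (Metric.sphere_subset_closedBall hζ))) k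
      have hmul := mul_le_mul_of_nonneg_right hcau hνz.le
      calc ‖En k ξ‖ * ν z ≤ (k.factorial * (M0 / ν z) / (r - R)^k) * ν z := hmul
        _ = KK k := by
            rw [hKKdef]
            field_simp
  -- Taylor estimate
    have hTay : ∀ z ∈ Ω, ∀ (k : ℕ), ∀ h : ℂ, ‖h‖ ≤ R →
        ‖En k (z - x₀ - h) - En k (z - x₀) + h * En (k+1) (z - x₀)‖ * ν z
          ≤ KK (k+2) * ‖h‖^2 := by
      intro z hz k h hh
      have hνz := hνpos z hz
      have hζ₀ : dXΩ ≤ ‖z - x₀‖ := hdist x₀ hx₀ z hz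
      have hsubU : Metric.closedBall (z - x₀) R ⊆ {z : ℂ | z ≠ 0} := by
        intro ζ hζ
        rw [Metric.mem_closedBall, dist_eq_norm] at hζ
        have h2 : ‖z - x₀‖ - ‖ζ‖ ≤ R := by
          have h3 := norm_sub_norm_le (z - x₀) ζ
          rw [norm_sub_rev] at hζ
          linarith
        show ζ ≠ 0
        intro h0
        rw [h0, norm_zero] at h2
        linarith
      have hb := taylor_bound (f := En k) (f' := En (k+1)) (f'' := En (k+2))
        (ζ₀ := z - x₀) (R := R) (C₂ := KK (k+2) / ν z)
        (fun ξ hξ => hEnD k ξ (hsubU hξ))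
        (fun ξ hξ => hEnD (k+1) ξ (hsubU hξ))
        (fun ξ hξ => (le_div_iff₀ hνz).mpr (hEnbound z hz (k+2) ξ hξ)) hh
      have hmul := mul_le_mul_of_nonneg_right hb hνz.le
      refine le_trans hmul (le_of_eq ?_)
      field_simp
    -- assemble
    set Kmax : ℝ := ∑ j ∈ Finset.range (m+1), KK (n+j+2) with hKmaxdef
    have hKmaxpos : 0 < Kmax := by
      rw [hKmaxdef]
      apply Finset.sum_pos (fun i _ => hKKpos _)
      exact ⟨0, Finset.mem_range.mpr (by omega)⟩
    have hKle : ∀ j, j ≤ m → KK (n+j+2) ≤ Kmax := by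
      intro j hj
      rw [hKmaxdef]
      exact Finset.single_le_sum (f := fun j => KK (n+j+2)) (fun i _ => (hKKpos _).le)
        (Finset.mem_range.mpr (by omega))
    rw [hasDerivAt_iff_isLittleO_nhds_zero]
    have big : ∀ h : ℂ, ‖h‖ ≤ R →
        ‖w (fun z => (-1:ℂ)^n * En n (z - (x₀ + h))) - w (fun z => (-1:ℂ)^n * En n (z - x₀))
          - h • w (fun z => (-1:ℂ)^(n+1) * En (n+1) (z - x₀))‖ ≤ (C * Kmax) * ‖h‖^2 := by
      intro h hh
      set G : ℕ → ℂ → ℂ := fun j z => (-1:ℂ)^n *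
        (En (n+j) (z - (x₀+h)) - En (n+j) (z - x₀) + h * En (n+j+1) (z - x₀)) with hGdef
      have hexp : w (fun z => (-1:ℂ)^n * En n (z - (x₀ + h))) - w (fun z => (-1:ℂ)^n * En n (z - x₀))
          - h • w (fun z => (-1:ℂ)^(n+1) * En (n+1) (z - x₀)) = w (G 0) := by
        rw [← map_smul, ← map_sub, ← map_sub]
        congr 1
        funext z
        simp only [Pi.sub_apply, Pi.smul_apply, smul_eq_mul, hGdef]
        ring
      rw [hexp]
      have hbound : ∀ z ∈ Ω, ∀ a b : ℕ, a + b ≤ m →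
          ‖pdi a b (G 0) z‖ * ν z ≤ Kmax * ‖h‖^2 := by
        intro z hz a b hab
        have hVopen : IsOpen {y : ℂ | R < ‖y - x₀‖} := by
          apply isOpen_lt continuous_const
          exact (continuous_id.sub continuous_const).norm
        have hzV : z ∈ {y : ℂ | R < ‖y - x₀‖} := by
          have := hdist x₀ hx₀ z hz
          show R < ‖z - x₀‖
          linarith
        have hGfam : ∀ j, ∀ y ∈ {y : ℂ | R < ‖y - x₀‖}, HasDerivAt (G j) (G (j+1) y) y := by
          intro j y hy
          have hyV : R < ‖y - x₀‖ := hy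
          have hy1 : y - x₀ ≠ 0 := by
            intro h0; rw [h0, norm_zero] at hyV; linarith
          have hy2 : y - (x₀ + h) ≠ 0 := by
            intro h0
            have he2 : y - x₀ = h := by
              have := sub_eq_zero.mp h0
              rw [this]; ring
            rw [he2] at hyV; linarith
          have hd2 := (((hshift (x₀+h) (n+j) y hy2).sub (hshift x₀ (n+j) y hy1)).add
            ((hshift x₀ (n+j+1) y hy1).const_mul h)).const_mul ((-1:ℂ)^n)
          exact hd2
        rw [show pdi a b (G 0) z = I^b * G (a+b) z from pdi_family hVopen hGfam a b hzV]
        rw [norm_mul, norm_pow, Complex.norm_I, one_pow, one_mul]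
        have hGnorm : ‖G (a+b) z‖ = ‖En (n+(a+b)) (z - x₀ - h) - En (n+(a+b)) (z - x₀)
            + h * En (n+(a+b)+1) (z - x₀)‖ := by
          rw [hGdef]
          simp only [sub_add_eq_sub_sub]
          rw [norm_mul]
          simp
        rw [hGnorm]
        calc ‖En (n+(a+b)) (z - x₀ - h) - En (n+(a+b)) (z - x₀)
              + h * En (n+(a+b)+1) (z - x₀)‖ * ν z
            ≤ KK (n+(a+b)+2) * ‖h‖^2 := hTay z hz (n+(a+b)) h hh
          _ ≤ Kmax * ‖h‖^2 :=
              mul_le_mul_of_nonneg_right (hKle (a+b) hab) (by positivity)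
      calc ‖w (G 0)‖ ≤ C * (Kmax * ‖h‖^2) := hw (G 0) (Kmax * ‖h‖^2) hbound
        _ = (C * Kmax) * ‖h‖^2 := by ring
    have hbigO : (fun h : ℂ => w (fun z => (-1:ℂ)^n * En n (z - (x₀ + h)))
        - w (fun z => (-1:ℂ)^n * En n (z - x₀))
        - h • w (fun z => (-1:ℂ)^(n+1) * En (n+1) (z - x₀)))
        =O[nhds 0] (fun h : ℂ => ‖h‖^2) := by
      apply Asymptotics.IsBigO.of_bound (C * Kmax)
      filter_upwards [Metric.closedBall_mem_nhds (0:ℂ) hR] with h hh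
      rw [Metric.mem_closedBall, dist_zero_right] at hh
      calc ‖w (fun z => (-1:ℂ)^n * En n (z - (x₀ + h))) - w (fun z => (-1:ℂ)^n * En n (z - x₀))
          - h • w (fun z => (-1:ℂ)^(n+1) * En (n+1) (z - x₀))‖
          ≤ (C * Kmax) * ‖h‖^2 := big h hh
        _ = (C * Kmax) * ‖(‖h‖^2 : ℝ)‖ := by
            rw [Real.norm_of_nonneg (by positivity)]
    have hlo : (fun h : ℂ => (‖h‖^2 : ℝ)) =o[nhds 0] (fun h : ℂ => h) := by
      rw [Asymptotics.isLittleO_iff]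
      intro ε hε
      filter_upwards [Metric.closedBall_mem_nhds (0:ℂ) hε] with h hh
      rw [Metric.mem_closedBall, dist_zero_right] at hh
      rw [Real.norm_of_nonneg (by positivity : (0:ℝ) ≤ ‖h‖^2), pow_two]
      exact mul_le_mul_of_nonneg_right hh (norm_nonneg h)
    exact hbigO.trans_isLittleO hlo
  -- conclusion
  have hF0eq : (fun x => w (fun z => E (z - x)))
      = (fun x => w (fun z => (-1:ℂ)^0 * En 0 (z - x))) := by
    funext x; congr 1; funext z
    simp [hEndef]
  constructor
  · rw [hF0eq]
    have hFdiffX : DifferentiableOn ℂ (fun x => w (fun z => (-1:ℂ)^0 * En 0 (z - x))) X :=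
      fun x hx => ((main 0 x hx).differentiableAt).differentiableWithinAt
    exact (hFdiffX.contDiffOn hX).restrict_scalars ℝ
  · intro x hx a b
    rw [hF0eq]
    rw [show pdi a b (fun x => w (fun z => (-1:ℂ)^0 * En 0 (z - x))) x
        = I^b * w (fun z => (-1:ℂ)^(a+b) * En (a+b) (z - x)) from
      pdi_family hX (G := fun j => fun x => w (fun z => (-1:ℂ)^j * En j (z - x)))
        (fun j y hy => main j y hy) a b hx]
    have hRHS : w (fun z => pdi a b (fun x' => E (z - x')) x)
        = w (fun z => I^b * ((-1:ℂ)^(a+b) * En (a+b) (z - x))) := by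
      apply wcongr
      intro z hz
      show pdi a b (fun x' => E (z - x')) x = I^b * ((-1:ℂ)^(a+b) * En (a+b) (z - x))
      have hzx : z - x ≠ 0 := by
        have := hdist x hx z hz
        intro h0; rw [h0, norm_zero] at this; linarith
      have hVzopen : IsOpen {x' : ℂ | z - x' ≠ 0} := by
        have he : {x' : ℂ | z - x' ≠ 0} = (fun x' : ℂ => z - x') ⁻¹' {(0:ℂ)}ᶜ := rfl
        rw [he]
        exact isOpen_compl_singleton.preimage (continuous_const.sub continuous_id)
      have heq0 : (fun x' => E (z - x')) = (fun x' => (-1:ℂ)^0 * En 0 (z - x')) := by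
        funext x'; simp [hEndef]
      rw [heq0]
      have hfam : ∀ j, ∀ x' ∈ {x' : ℂ | z - x' ≠ 0}, HasDerivAt
          (fun x' => (-1:ℂ)^j * En j (z - x')) ((-1:ℂ)^(j+1) * En (j+1) (z - x')) x' := by
        intro j x' hx'
        have := (hshift' z j x' hx').const_mul ((-1:ℂ)^j)
        refine this.congr_deriv ?_
        ring
      exact pdi_family hVzopen hfam a b hzx
    rw [hRHS]
    have hsmul : (fun z => I^b * ((-1:ℂ)^(a+b) * En (a+b) (z - x)))
        = (I^b) • (fun z => (-1:ℂ)^(a+b) * En (a+b) (z - x)) := by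
      funext z; simp [Pi.smul_apply, smul_eq_mul]
    rw [hsmul, map_smul, smul_eq_mul]
end
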